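/- arXiv:2602.16472 — 2 statements merged into one kernel-verified Lean document; each statement's English description precedes it below -/
import Mathlib

section
/- Let G be a bridged graph. If G contains an induced cycle of length greater than 3, then G contains an induced subgraph isomorphic to a 3-fan. -/
open SimpleGraph

namespace PaperDefs

universe u w

variable {V : Type u} {W : Type w}

/-- The cycle graph of length `n`, on vertex set `ZMod n`. -/
def cycleG (n : ℕ) : SimpleGraph (ZMod n) where
  Adj i j := i ≠ j ∧ (i - j = 1 ∨ j - i = 1)
  symm := by
    constructor
    intro i j h
    exact ⟨h.1.symm, h.2.symm⟩
  loopless := by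
    constructor
    intro i h
    exact h.1 rfl

/-- The 3-fan: a path `0-1-2-3` together with the vertex `4` adjacent to all of `0,1,2,3`. -/
def fan3 : SimpleGraph (Fin 5) :=
  SimpleGraph.fromRel (fun i j =>
    (i = 0 ∧ j = 1) ∨ (i = 1 ∧ j = 2) ∨ (i = 2 ∧ j = 3) ∨ i = 4)

/-- A graph is bridged if it is connected and every isometric cycle has length 3. -/
def IsBridged (G : SimpleGraph V) : Prop :=
  G.Connected ∧
    ∀ (n : ℕ) (f : ZMod n → V), 3 ≤ n → Function.Injective f →
      (∀ i j, (cycleG n).Adj i j → G.Adj (f i) (f j)) →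
      (∀ i j, G.dist (f i) (f j) = (cycleG n).dist i j) → n = 3

/-- The metric interval between `u` and `v`. -/
def interval (G : SimpleGraph V) (u v : V) : Set V :=
  {x | G.dist u x + G.dist x v = G.dist u v}

/-- The `k`-th level set of the interval `I(u,v)`. -/
def level (G : SimpleGraph V) (u v : V) (k : ℕ) : Set V :=
  {x | x ∈ interval G u v ∧ G.dist u x = k}

/-- A set of vertices is convex if it contains the interval between any two of its points. -/
def ConvexSet (G : SimpleGraph V) (A : Set V) : Prop :=
  ∀ x ∈ A, ∀ y ∈ A, interval G x y ⊆ A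

/-- A graph is chordal if it has no induced cycle of length greater than 3. -/
def Chordal (G : SimpleGraph V) : Prop :=
  ∀ n : ℕ, 3 < n → IsEmpty ((cycleG n) ↪g G)

/-- The `n`-tripod: a centre (`none`) with three arms, each a path of length `n`. -/
def tripodG (n : ℕ) : SimpleGraph (Option (Fin 3 × Fin n)) :=
  SimpleGraph.fromRel (fun a b =>
    match a, b with
    | none, some (_, j) => (j : ℕ) = 0
    | some (i, j), some (i', j') => i = i' ∧ (j' : ℕ) = (j : ℕ) + 1
    | _, _ => False)

/-- The `n`-asteroid: a triangle (`Sum.inl`) with a path of length `n` attached to each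
triangle vertex. -/
def asteroidG (n : ℕ) : SimpleGraph (Fin 3 ⊕ (Fin 3 × Fin n)) :=
  SimpleGraph.fromRel (fun a b =>
    match a, b with
    | Sum.inl i, Sum.inl i' => i ≠ i'
    | Sum.inl i, Sum.inr (i', j) => i = i' ∧ (j : ℕ) = 0
    | Sum.inr (i, j), Sum.inr (i', j') => i = i' ∧ (j' : ℕ) = (j : ℕ) + 1
    | _, _ => False)

/-- The doubled asteroid: two triangles `a₁a₂a₃`, `b₁b₂b₃` and three pairwise non-adjacent
vertices `c₁,c₂,c₃`, with `cᵢ` adjacent exactly to `aᵢ` and `bᵢ`. -/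
def doubledAsteroidG : SimpleGraph (Fin 3 ⊕ (Fin 3 ⊕ Fin 3)) :=
  SimpleGraph.fromRel (fun a b =>
    match a, b with
    | Sum.inl i, Sum.inl j => i ≠ j
    | Sum.inr (Sum.inl i), Sum.inr (Sum.inl j) => i ≠ j
    | Sum.inl i, Sum.inr (Sum.inr j) => i = j
    | Sum.inr (Sum.inl i), Sum.inr (Sum.inr j) => i = j
    | _, _ => False)

/-- `f` realizes `H` as an isometrically embedded subgraph of `G`. -/
def IsomEmbedded (H : SimpleGraph W) (G : SimpleGraph V) (f : W → V) : Prop :=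
  Function.Injective f ∧ (∀ a b, H.Adj a b → G.Adj (f a) (f b)) ∧
    ∀ a b, G.dist (f a) (f b) = H.dist a b

/-- A graph is `N`-branchless if it contains no isometrically embedded `n`-tripod and no
isometrically embedded `n`-asteroid with `n > N`. -/
def Branchless (G : SimpleGraph V) (N : ℕ) : Prop :=
  ∀ n : ℕ, N < n →
    (∀ f : Option (Fin 3 × Fin n) → V, ¬ IsomEmbedded (tripodG n) G f) ∧
    (∀ f : Fin 3 ⊕ (Fin 3 × Fin n) → V, ¬ IsomEmbedded (asteroidG n) G f)

/-- The graph `G` (with its path metric) is `(B,C)`-quasi-isometric to a segment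
`{0, 1, …, L}` with the standard metric. -/
def SegmentQI {α : Type*} (G : SimpleGraph α) (B C : ℝ) : Prop :=
  ∃ (L : ℕ) (f : α → Fin (L + 1)),
    (∀ x y : α, B⁻¹ * (G.dist x y : ℝ) - C ≤ |((f x : ℕ) : ℝ) - ((f y : ℕ) : ℝ)|) ∧
    (∀ x y : α, |((f x : ℕ) : ℝ) - ((f y : ℕ) : ℝ)| ≤ B * (G.dist x y : ℝ) + C) ∧
    ∀ i : Fin (L + 1), ∃ x : α, |((f x : ℕ) : ℝ) - ((i : ℕ) : ℝ)| ≤ C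

/-- A bridged graph is fit if there are constants `B, C > 0` such that every level set of
every interval is `(B,C)`-quasi-isometric to a segment. -/
def IsFit (G : SimpleGraph V) : Prop :=
  ∃ B C : ℝ, 0 < B ∧ 0 < C ∧
    ∀ (u v : V) (k : ℕ), k ≤ G.dist u v → SegmentQI (G.induce (level G u v k)) B C

/-- A graph is uniformly locally finite if its vertex degrees are uniformly bounded. -/
def UniformlyLocallyFinite (G : SimpleGraph V) : Prop :=
  ∃ D : ℕ, ∀ v : V, (G.neighborSet v).Finite ∧ (G.neighborSet v).ncard ≤ D

/-- Yu's Property A for the vertex set of a graph with its path metric. -/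
def HasPropertyA (G : SimpleGraph V) : Prop :=
  ∀ ε R : ℝ, 0 < ε → 0 < R →
    ∃ S : ℝ, 0 < S ∧ ∃ A : V → Set (V × ℕ),
      (∀ x : V, (A x).Finite ∧ (A x).Nonempty) ∧
      (∀ x y : V, (G.dist x y : ℝ) ≤ R →
        ((symmDiff (A x) (A y)).ncard : ℝ) ≤ ε * ((A x ∩ A y).ncard : ℝ)) ∧
      ∀ x : V, ∀ p ∈ A x, (G.dist x p.1 : ℝ) ≤ S

end PaperDefs

namespace PaperDefs

variable {V₀ : Type*}

def MetricTriangle (G : SimpleGraph V₀) (u v w : V₀) : Prop :=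
  interval G u v ∩ interval G v w = {v} ∧
  interval G v w ∩ interval G w u = {w} ∧
  interval G w u ∩ interval G u v = {u}

def ballStar (G : SimpleGraph V₀) (K : Set V₀) : Set V₀ :=
  {x | ∀ s ∈ K, G.dist x s ≤ 1}

def ncp (G : SimpleGraph V₀) (u v : V₀) : ℕ → Set V₀
  | 0 => {v}
  | j + 1 => ballStar G (ncp G u v j) ∩ {x | G.dist u x ≤ G.dist u v - (j + 1)}

def altWord {α : Type*} (a b : α) : ℕ → FreeGroup α
  | 0 => 1
  | n + 1 => FreeGroup.of a * altWord b a n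

def artinRels {α : Type*} (Γ : SimpleGraph α) (m : α → α → ℕ) : Set (FreeGroup α) :=
  {w | ∃ a b, Γ.Adj a b ∧ w = altWord a b (m a b) * (altWord b a (m a b))⁻¹}

def cayleyGraph (H : Type*) [Group H] (S : Set H) : SimpleGraph H where
  Adj g h := g ≠ h ∧ (g⁻¹ * h ∈ S ∨ h⁻¹ * g ∈ S)
  symm := by
    constructor
    intro g h hgh
    exact ⟨hgh.1.symm, hgh.2.symm⟩
  loopless := by
    constructor
    intro g hg
    exact hg.1 rfl

end PaperDefs

open PaperDefs

namespace PaperDefs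

section Aux

variable {V : Type*} {G : SimpleGraph V}

lemma dist_ge_two (hc : G.Connected) {u v : V} (h : 2 ≤ G.dist u v) :
    ¬ G.Adj u v ∧ u ≠ v := by
  constructor
  · intro hadj
    have := SimpleGraph.dist_eq_one_iff_adj.mpr hadj
    omega
  · intro he
    rw [he] at h
    simp [SimpleGraph.dist_self] at h

lemma adj_dist_le_one (hc : G.Connected) {u v : V} (h : G.Adj u v) : G.dist u v ≤ 1 :=
  le_of_eq (SimpleGraph.dist_eq_one_iff_adj.mpr h)

lemma dist_getVert_left (hc : G.Connected) {x y : V} (W : G.Walk x y) :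
    ∀ k, G.dist x (W.getVert k) ≤ k := by
  intro k
  induction k with
  | zero => simp [SimpleGraph.Walk.getVert_zero, SimpleGraph.dist_self]
  | succ k ih =>
    by_cases hk : k < W.length
    · calc G.dist x (W.getVert (k+1)) ≤ G.dist x (W.getVert k) + G.dist (W.getVert k) (W.getVert (k+1)) :=
            hc.dist_triangle
        _ ≤ k + 1 := by
            have := adj_dist_le_one hc (W.adj_getVert_succ hk)
            omega
    · have h1 : W.getVert (k+1) = W.getVert k := by
        rw [W.getVert_of_length_le (by omega), W.getVert_of_length_le (by omega)]
      rw [h1]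
      omega

lemma dist_getVert_right (hc : G.Connected) {x y : V} (W : G.Walk x y) :
    ∀ k, G.dist (W.getVert k) y ≤ W.length - k := by
  induction W with
  | nil =>
    intro k
    simp [SimpleGraph.Walk.getVert, SimpleGraph.dist_self]
  | @cons u v w h W ih =>
    intro k
    cases k with
    | zero =>
      simpa using SimpleGraph.dist_le (SimpleGraph.Walk.cons h W)
    | succ k =>
      have : (SimpleGraph.Walk.cons h W).getVert (k+1) = W.getVert k := rfl
      rw [this]
      have := ih k
      simp only [SimpleGraph.Walk.length_cons]
      omega

/-- On a geodesic walk, distances to endpoints are exact. -/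
lemma geodesic_getVert (hc : G.Connected) {x y : V} (W : G.Walk x y)
    (hW : W.length = G.dist x y) {k : ℕ} (hk : k ≤ W.length) :
    G.dist x (W.getVert k) = k ∧ G.dist (W.getVert k) y = W.length - k := by
  have h1 := dist_getVert_left hc W k
  have h2 := dist_getVert_right hc W k
  have h3 : G.dist x y ≤ G.dist x (W.getVert k) + G.dist (W.getVert k) y := hc.dist_triangle
  omega

end Aux

end PaperDefs
namespace PaperDefs

section Cyc

variable {m : ℕ}

lemma cycleG_adj_succ (hm : 2 ≤ m) (i : ZMod m) : (cycleG m).Adj i (i + 1) := by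
  refine ⟨?_, Or.inr (by ring)⟩
  intro h
  have h1 : ((1 : ℕ) : ZMod m) = 0 := by
    have := congrArg (fun z => z - i) h
    simpa using this.symm
  rw [ZMod.natCast_eq_zero_iff] at h1
  have := Nat.le_of_dvd one_pos h1
  omega

/-- A walk in the cycle graph from `i` to `i + ℓ` of length `ℓ`. -/
def cwalk (hm : 2 ≤ m) : (i : ZMod m) → (ℓ : ℕ) → (cycleG m).Walk i (i + (ℓ : ℕ))
  | i, 0 => (SimpleGraph.Walk.nil : (cycleG m).Walk i i).copy rfl (by push_cast; ring)
  | i, (ℓ+1) =>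
      (SimpleGraph.Walk.cons (cycleG_adj_succ hm i) (cwalk hm (i+1) ℓ)).copy rfl
        (by push_cast; ring)

@[simp] lemma cwalk_length (hm : 2 ≤ m) (i : ZMod m) (ℓ : ℕ) :
    (cwalk hm i ℓ).length = ℓ := by
  induction ℓ generalizing i with
  | zero => simp [cwalk]
  | succ ℓ ih => simp [cwalk, ih]

lemma cycleG_dist_le (hm : 2 ≤ m) (i : ZMod m) (ℓ : ℕ) :
    (cycleG m).dist i (i + (ℓ : ℕ)) ≤ ℓ := by
  have := SimpleGraph.dist_le (cwalk hm i ℓ)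
  simpa using this

lemma cycleG_reachable (hm : 2 ≤ m) (i j : ZMod m) : (cycleG m).Reachable i j := by
  have : NeZero m := ⟨by omega⟩
  have h : i + (((j - i).val : ℕ) : ZMod m) = j := by
    rw [ZMod.natCast_val, ZMod.cast_id]
    ring
  exact ⟨(cwalk hm i (j - i).val).copy rfl h⟩

variable {V : Type*} {G : SimpleGraph V}

/-- Distance in G between images is at most distance in the cycle. -/
lemma dist_image_le (hm : 2 ≤ m) (f : cycleG m ↪g G) (i j : ZMod m) :
    G.dist (f i) (f j) ≤ (cycleG m).dist i j := by
  obtain ⟨W, hW⟩ := (cycleG_reachable hm i j).exists_walk_length_eq_dist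
  have := SimpleGraph.dist_le (W.map f.toHom)
  rwa [SimpleGraph.Walk.length_map, hW] at this

lemma dist_image_arc_le (hm : 2 ≤ m) (f : cycleG m ↪g G) (i : ZMod m) (ℓ : ℕ) :
    G.dist (f i) (f (i + (ℓ : ℕ))) ≤ ℓ := by
  have := SimpleGraph.dist_le ((cwalk hm i ℓ).map f.toHom)
  simpa using this

/-- Key: if all arc distances are exact then the embedding is isometric, so `m = 3`. -/
lemma bridged_arcs (hG : IsBridged G) (hm : 3 ≤ m) (f : cycleG m ↪g G)
    (H : ∀ (i : ZMod m) (ℓ : ℕ), 2 * ℓ ≤ m → G.dist (f i) (f (i + (ℓ : ℕ))) = ℓ) :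
    m = 3 := by
  have : NeZero m := ⟨by omega⟩
  have hm2 : 2 ≤ m := by omega
  apply hG.2 m f hm f.injective (fun i j hij => f.toHom.map_adj hij)
  intro i j
  -- both equal to min arc length
  set δ := (j - i).val with hδ
  have hδlt : δ < m := ZMod.val_lt _
  have hij : i + (δ : ℕ) = j := by
    rw [hδ, ZMod.natCast_val, ZMod.cast_id]; ring
  rcases le_or_gt (2 * δ) m with hle | hgt
  · have h1 : G.dist (f i) (f j) = δ := by rw [← hij]; exact H i δ hle
    have h2 : (cycleG m).dist i j ≤ δ := by rw [← hij]; exact cycleG_dist_le hm2 i δ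
    have h3 := dist_image_le hm2 f i j
    omega
  · -- go the other way: ε = m - δ
    set ε := m - δ with hε
    have hji : j + (ε : ℕ) = i := by
      have : ((ε : ℕ) : ZMod m) = (i - j) := by
        have hδ0 : δ ≠ 0 := by omega
        have : ((m : ℕ) : ZMod m) = 0 := by
          rw [ZMod.natCast_eq_zero_iff]
        calc ((ε : ℕ) : ZMod m) = ((m : ℕ) : ZMod m) - ((δ : ℕ) : ZMod m) := by
              rw [hε]; push_cast [Nat.cast_sub (le_of_lt hδlt)]; ring
          _ = - ((δ:ℕ) : ZMod m) := by rw [this]; ring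
          _ = i - j := by rw [hδ, ZMod.natCast_val, ZMod.cast_id]; ring
      rw [this]; ring
    have h1 : G.dist (f j) (f i) = ε := by rw [← hji]; exact H j ε (by omega)
    have h2 : (cycleG m).dist j i ≤ ε := by rw [← hji]; exact cycleG_dist_le hm2 j ε
    have h3 := dist_image_le hm2 f j i
    have e1 : G.dist (f i) (f j) = G.dist (f j) (f i) := SimpleGraph.dist_comm
    have e2 : (cycleG m).dist i j = (cycleG m).dist j i := SimpleGraph.dist_comm
    omega

end Cyc

end PaperDefs
namespace PaperDefs

section Small

variable {m : ℕ} {V : Type*} {G : SimpleGraph V}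

lemma natCast_ne_zero_zmod {a : ℕ} (h0 : 0 < a) (h : a < m) : ((a : ℕ) : ZMod m) ≠ 0 := by
  intro hc
  rw [ZMod.natCast_eq_zero_iff] at hc
  have := Nat.le_of_dvd h0 hc
  omega

lemma cycleG_not_adj {a : ℕ} (h2 : 2 ≤ a) (ha : a + 1 < m) (i : ZMod m) :
    ¬ (cycleG m).Adj i (i + (a : ℕ)) := by
  rintro ⟨hne, h | h⟩
  · -- i - (i + a) = 1, i.e. (a+1 : ZMod m) = 0
    have : ((a + 1 : ℕ) : ZMod m) = 0 := by
      push_cast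
      have : -((a : ℕ) : ZMod m) = 1 := by rw [← h]; ring
      rw [← this]; ring
    exact natCast_ne_zero_zmod (by omega) ha this
  · -- (i + a) - i = 1, i.e. (a - 1 : ZMod m) = 0
    have : ((a - 1 : ℕ) : ZMod m) = 0 := by
      push_cast [Nat.cast_sub (by omega : 1 ≤ a)]
      have : ((a : ℕ) : ZMod m) = 1 := by rw [← h]; ring
      rw [this]; ring
    exact natCast_ne_zero_zmod (by omega) (by omega) this

lemma ne_of_natCast_add {a : ℕ} (h0 : 0 < a) (h : a < m) (i : ZMod m) : i ≠ i + (a : ℕ) := by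
  intro hc
  have : ((a : ℕ) : ZMod m) = 0 := by
    have := congrArg (fun z => z - i) hc
    simpa using this.symm
  exact natCast_ne_zero_zmod h0 h this

lemma dist_ge_two_of (hc : G.Connected) {u v : V} (hne : u ≠ v) (hna : ¬ G.Adj u v) :
    2 ≤ G.dist u v := by
  have h0 : G.dist u v ≠ 0 := fun h => hne (hc.dist_eq_zero_iff.mp h)
  have h1 : G.dist u v ≠ 1 := fun h => hna (SimpleGraph.dist_eq_one_iff_adj.mp h)
  omega

/-- No induced cycles of length 4 or 5 in a bridged graph. -/
lemma no_small_cycles (hG : IsBridged G) (hm : 4 ≤ m) (hm' : m ≤ 5)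
    (f : cycleG m ↪g G) : False := by
  have hm2 : 2 ≤ m := by omega
  have h3 := bridged_arcs hG (by omega) f ?_
  · omega
  intro i ℓ hℓ
  have hℓ2 : ℓ ≤ 2 := by omega
  interval_cases ℓ
  · simpa using (SimpleGraph.dist_self (G := G))
  · have : ((1:ℕ) : ZMod m) = 1 := Nat.cast_one
    rw [this]
    exact SimpleGraph.dist_eq_one_iff_adj.mpr (f.toHom.map_adj (cycleG_adj_succ hm2 i))
  · refine le_antisymm (dist_image_arc_le hm2 f i 2) ?_
    apply dist_ge_two_of hG.1
    · intro hc
      exact ne_of_natCast_add (by omega) (by omega) i (f.injective hc)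
    · intro hadj
      exact cycleG_not_adj (by omega) (by omega) i (f.map_rel_iff.mp hadj)

end Small

end PaperDefs
namespace PaperDefs

section Glue

variable {L : ℕ} {V : Type*} {G : SimpleGraph V}

lemma zmod_sub_eq_one_iff (hL : 3 ≤ L) (i j : ZMod L) :
    j - i = 1 ↔ (j.val = i.val + 1 ∨ (j.val = 0 ∧ i.val = L - 1)) := by
  have : NeZero L := ⟨by omega⟩
  have : Fact (1 < L) := ⟨by omega⟩
  have hival := ZMod.val_lt i
  have hjval := ZMod.val_lt j
  constructor
  · intro h
    have hj : j = i + 1 := by rw [← h]; ring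
    have : j.val = (i.val + 1) % L := by
      rw [hj, ZMod.val_add, ZMod.val_one]
    rcases Nat.lt_or_ge (i.val + 1) L with h' | h'
    · left; rw [this, Nat.mod_eq_of_lt h']
    · right
      have hiv : i.val = L - 1 := by omega
      constructor
      · rw [this, hiv]
        simp [Nat.sub_add_cancel (by omega : 1 ≤ L)]
      · exact hiv
  · intro h
    have : j = i + 1 := by
      apply ZMod.val_injective
      rw [ZMod.val_add, ZMod.val_one]
      rcases h with ⟨h⟩ | ⟨h0, h1⟩
      · rw [h]; exact (Nat.mod_eq_of_lt (by omega)).symm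
      · rw [h0, h1, Nat.sub_add_cancel (by omega : 1 ≤ L), Nat.mod_self]
    rw [this]; ring

/-- Build an induced-cycle embedding from an explicit vertex sequence. -/
lemma cycle_embedding_of (hL : 3 ≤ L) (u : ℕ → V)
    (hadj : ∀ n, n + 1 < L → G.Adj (u n) (u (n + 1)))
    (hclose : G.Adj (u (L - 1)) (u 0))
    (hnon : ∀ n n', n < n' → n' < L → n' ≠ n + 1 → ¬(n = 0 ∧ n' = L - 1) →
      ¬ G.Adj (u n) (u n') ∧ u n ≠ u n') :
    Nonempty (cycleG L ↪g G) := by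
  have : NeZero L := ⟨by omega⟩
  -- full distinctness
  have hne : ∀ n n', n < n' → n' < L → u n ≠ u n' := by
    intro n n' h1 h2
    by_cases hc : n' = n + 1
    · subst hc; exact (hadj n h2).ne
    by_cases hc2 : n = 0 ∧ n' = L - 1
    · rw [hc2.1, hc2.2]; exact hclose.ne'
    exact (hnon n n' h1 h2 hc hc2).2
  -- adjacency at nat level
  have hGadj : ∀ n n', n < L → n' < L → ((n' = n + 1 ∨ (n' = 0 ∧ n = L - 1)) →
      G.Adj (u n) (u n')) := by
    intro n n' hn hn' h
    rcases h with h | ⟨h0, h1⟩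
    · subst h; exact hadj n hn'
    · rw [h0, h1]; exact hclose
  have hGnon : ∀ n n', n < L → n' < L → n ≠ n' →
      ¬(n' = n + 1 ∨ (n' = 0 ∧ n = L - 1)) → ¬(n = n' + 1 ∨ (n = 0 ∧ n' = L - 1)) →
      ¬ G.Adj (u n) (u n') := by
    intro n n' hn hn' hne' hA hB
    rcases Nat.lt_or_ge n n' with h | h
    · exact (hnon n n' h hn' (by omega) (by push_neg at hB ⊢; intro h0; omega)).1
    · have h' : n' < n := by omega
      intro hadj'
      exact (hnon n' n h' hn (by omega) (by push_neg at hA ⊢; intro h0; omega)).1 hadj'.symm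
  refine ⟨⟨⟨fun i => u i.val, ?_⟩, ?_⟩⟩
  · intro i j h
    by_contra hij
    have hvv : i.val ≠ j.val := fun hc => hij (ZMod.val_injective _ hc)
    rcases Nat.lt_or_ge i.val j.val with h' | h'
    · exact hne _ _ h' (ZMod.val_lt j) h
    · exact hne _ _ (by omega) (ZMod.val_lt i) h.symm
  · intro i j
    show G.Adj (u i.val) (u j.val) ↔ (cycleG L).Adj i j
    constructor
    · -- G.Adj → cycleG.Adj
      intro hadj'
      have hij : i ≠ j := fun hc => G.irrefl (hc ▸ hadj')
      have hvv : j.val ≠ i.val := fun hc => hij (ZMod.val_injective _ hc).symm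
      refine ⟨hij, ?_⟩
      by_contra hcon
      push_neg at hcon
      obtain ⟨h1, h2⟩ := hcon
      have h1' : ¬(i.val = j.val + 1 ∨ (i.val = 0 ∧ j.val = L - 1)) :=
        fun hc => h1 ((zmod_sub_eq_one_iff hL j i).mpr hc)
      have h2' : ¬(j.val = i.val + 1 ∨ (j.val = 0 ∧ i.val = L - 1)) :=
        fun hc => h2 ((zmod_sub_eq_one_iff hL i j).mpr hc)
      exact hGnon j.val i.val (ZMod.val_lt j) (ZMod.val_lt i) hvv h1' h2' hadj'.symm
    · rintro ⟨hij, h | h⟩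
      · rw [zmod_sub_eq_one_iff hL] at h
        have := hGadj j.val i.val (ZMod.val_lt j) (ZMod.val_lt i)
          (by rcases h with h | ⟨h1, h2⟩
              · exact Or.inl h
              · exact Or.inr ⟨h1, h2⟩)
        exact this.symm
      · rw [zmod_sub_eq_one_iff hL] at h
        exact hGadj i.val j.val (ZMod.val_lt i) (ZMod.val_lt j)
          (by rcases h with h | ⟨h1, h2⟩
              · exact Or.inl h
              · exact Or.inr ⟨h1, h2⟩)

end Glue

end PaperDefs
namespace PaperDefs

section Fan

variable {V : Type*} {G : SimpleGraph V}

lemma fan_of {v0 v1 v2 v3 a : V}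
    (e01 : G.Adj v0 v1) (e12 : G.Adj v1 v2) (e23 : G.Adj v2 v3)
    (ea0 : G.Adj a v0) (ea1 : G.Adj a v1) (ea2 : G.Adj a v2) (ea3 : G.Adj a v3)
    (n02 : ¬ G.Adj v0 v2) (n03 : ¬ G.Adj v0 v3) (n13 : ¬ G.Adj v1 v3)
    (d02 : v0 ≠ v2) (d03 : v0 ≠ v3) (d13 : v1 ≠ v3) :
    Nonempty (fan3 ↪g G) := by
  have d01 := e01.ne
  have d12 := e12.ne
  have d23 := e23.ne
  have da0 := ea0.ne
  have da1 := ea1.ne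
  have da2 := ea2.ne
  have da3 := ea3.ne
  refine ⟨⟨⟨![v0, v1, v2, v3, a], ?_⟩, ?_⟩⟩
  · intro x y h
    fin_cases x <;> fin_cases y <;>
      first
        | rfl
        | exact absurd h d01 | exact absurd h d02 | exact absurd h d03
        | exact absurd h d12 | exact absurd h d13 | exact absurd h d23
        | exact absurd h.symm d01 | exact absurd h.symm d02 | exact absurd h.symm d03
        | exact absurd h.symm d12 | exact absurd h.symm d13 | exact absurd h.symm d23
        | exact absurd h.symm da0 | exact absurd h.symm da1
        | exact absurd h.symm da2 | exact absurd h.symm da3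
        | exact absurd h da0 | exact absurd h da1 | exact absurd h da2 | exact absurd h da3
  · intro x y
    fin_cases x <;> fin_cases y <;> simp only [fan3, SimpleGraph.fromRel_adj] <;>
      first
        | exact iff_of_true e01 (by decide) | exact iff_of_true e01.symm (by decide)
        | exact iff_of_true e12 (by decide) | exact iff_of_true e12.symm (by decide)
        | exact iff_of_true e23 (by decide) | exact iff_of_true e23.symm (by decide)
        | exact iff_of_true ea0 (by decide) | exact iff_of_true ea0.symm (by decide)
        | exact iff_of_true ea1 (by decide) | exact iff_of_true ea1.symm (by decide)
        | exact iff_of_true ea2 (by decide) | exact iff_of_true ea2.symm (by decide)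
        | exact iff_of_true ea3 (by decide) | exact iff_of_true ea3.symm (by decide)
        | exact iff_of_false n02 (by decide)
        | exact iff_of_false (fun h => n02 h.symm) (by decide)
        | exact iff_of_false n03 (by decide)
        | exact iff_of_false (fun h => n03 h.symm) (by decide)
        | exact iff_of_false n13 (by decide)
        | exact iff_of_false (fun h => n13 h.symm) (by decide)
        | exact iff_of_false (G.loopless.irrefl _) (by decide)

end Fan

end PaperDefs
namespace PaperDefs

section Shortcut

variable {m : ℕ} {V : Type*} {G : SimpleGraph V}

/-- From a long induced cycle in a bridged graph, extract a minimal non-geodesic arc. -/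
lemma bridged_shortcut (hG : IsBridged G) (hm : 6 ≤ m) (f : cycleG m ↪g G) :
    ∃ (i₀ : ZMod m) (t : ℕ), 3 ≤ t ∧ 2 * t ≤ m ∧
      G.dist (f i₀) (f (i₀ + (t : ℕ))) < t ∧
      (∀ ℓ, ℓ < t → ∀ i : ZMod m, G.dist (f i) (f (i + (ℓ : ℕ))) = ℓ) := by
  have hm2 : 2 ≤ m := by omega
  have hP : ∃ ℓ : ℕ, ∃ i : ZMod m, 2 * ℓ ≤ m ∧ G.dist (f i) (f (i + (ℓ : ℕ))) ≠ ℓ := by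
    by_contra hc
    push_neg at hc
    have := bridged_arcs hG (by omega) f (fun i ℓ h => hc ℓ i h)
    omega
  classical
  obtain ⟨t, hspec, hmin⟩ :
      ∃ t : ℕ, (∃ i : ZMod m, 2 * t ≤ m ∧ G.dist (f i) (f (i + (t : ℕ))) ≠ t) ∧
        (∀ ℓ, ℓ < t → ∀ i : ZMod m, 2 * ℓ ≤ m → G.dist (f i) (f (i + (ℓ : ℕ))) = ℓ) := by
    refine ⟨Nat.find hP, Nat.find_spec hP, ?_⟩
    intro ℓ hℓ i h2
    have := Nat.find_min hP hℓ
    push_neg at this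
    exact this i h2
  obtain ⟨i₀, h2t, hdist⟩ := hspec
  have ht3 : 3 ≤ t := by
    by_contra hcon
    push_neg at hcon
    interval_cases t
    · apply hdist
      rw [Nat.cast_zero, add_zero]
      exact SimpleGraph.dist_self
    · apply hdist
      rw [Nat.cast_one]
      exact SimpleGraph.dist_eq_one_iff_adj.mpr (f.toHom.map_adj (cycleG_adj_succ hm2 i₀))
    · apply hdist
      refine le_antisymm (dist_image_arc_le hm2 f i₀ 2) ?_
      apply dist_ge_two_of hG.1
      · intro hc
        exact ne_of_natCast_add (by omega) (by omega) i₀ (f.injective hc)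
      · intro hadj
        exact cycleG_not_adj (by omega) (by omega) i₀ (f.map_rel_iff.mp hadj)
  refine ⟨i₀, t, ht3, h2t, ?_, ?_⟩
  · have := dist_image_arc_le hm2 f i₀ t
    omega
  · intro ℓ hℓ i
    exact hmin ℓ hℓ i (by omega)

/-- The `t = 3` case: a 2-shortcut over a 3-arc yields a 3-fan (or an induced C4/C5). -/
lemma fan_of_arc3 (hG : IsBridged G) (hm : 6 ≤ m) (f : cycleG m ↪g G) (i₀ : ZMod m)
    (h2ℓ : ∀ i : ZMod m, G.dist (f i) (f (i + ((2:ℕ) : ZMod m))) = 2)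
    (h3 : G.dist (f i₀) (f (i₀ + ((3:ℕ) : ZMod m))) = 2) :
    Nonempty (fan3 ↪g G) := by
  have hm2 : 2 ≤ m := by omega
  set c : ℕ → V := fun j => f (i₀ + ((j : ℕ) : ZMod m)) with hc
  have hcadj : ∀ j : ℕ, G.Adj (c j) (c (j+1)) := by
    intro j
    have := f.toHom.map_adj (cycleG_adj_succ hm2 (i₀ + ((j:ℕ) : ZMod m)))
    have h1 : (i₀ + ((j:ℕ) : ZMod m)) + 1 = i₀ + (((j+1 : ℕ)) : ZMod m) := by push_cast; ring
    rwa [h1] at this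
  have hd02 : G.dist (c 0) (c 2) = 2 := by
    have := h2ℓ (i₀ + ((0:ℕ) : ZMod m))
    have h1 : (i₀ + ((0:ℕ) : ZMod m)) + ((2:ℕ) : ZMod m) = i₀ + ((2:ℕ) : ZMod m) := by
      push_cast; ring
    rwa [h1] at this
  have hd13 : G.dist (c 1) (c 3) = 2 := by
    have := h2ℓ (i₀ + ((1:ℕ) : ZMod m))
    have h1 : (i₀ + ((1:ℕ) : ZMod m)) + ((2:ℕ) : ZMod m) = i₀ + ((3:ℕ) : ZMod m) := by
      push_cast; ring
    rwa [h1] at this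
  have hd03 : G.dist (c 0) (c 3) = 2 := by
    have h1 : c 0 = f i₀ := by simp [hc]
    rw [h1]; exact h3
  obtain ⟨hn02, hne02⟩ := dist_ge_two hG.1 hd02.ge
  obtain ⟨hn13, hne13⟩ := dist_ge_two hG.1 hd13.ge
  obtain ⟨hn03, hne03⟩ := dist_ge_two hG.1 hd03.ge
  -- midpoint of the shortcut
  obtain ⟨W, hW⟩ := hG.1.exists_walk_length_eq_dist (c 0) (c 3)
  rw [hd03] at hW
  set a := W.getVert 1 with hA
  have ha0 : G.Adj (c 0) a := by
    have := W.adj_getVert_succ (by omega : 0 < W.length)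
    rwa [W.getVert_zero] at this
  have ha3 : G.Adj a (c 3) := by
    have := W.adj_getVert_succ (by omega : 1 < W.length)
    have h2 : W.getVert 2 = c 3 := by
      rw [show (2 : ℕ) = W.length by omega]; exact W.getVert_length
    rwa [h2] at this
  have hane1 : a ≠ c 1 := by
    intro hcc
    rw [hcc] at ha3
    exact hn13 ha3
  have hane2 : a ≠ c 2 := by
    intro hcc
    rw [hcc] at ha0
    exact hn02 ha0
  by_cases h1 : G.Adj a (c 1) <;> by_cases hcase2 : G.Adj a (c 2)
  · -- fan!
    exact fan_of (hcadj 0) (hcadj 1) (hcadj 2) ha0.symm h1 hcase2 ha3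
      hn02 hn03 hn13 hne02 hne03 hne13
  · -- induced C4 on a, c1, c2, c3
    exfalso
    have h4 := cycle_embedding_of (G := G) (by omega : 3 ≤ 4)
      (fun n => if n = 0 then a else c n) ?_ ?_ ?_
    · obtain ⟨emb⟩ := h4
      exact no_small_cycles hG (by omega) (by omega) emb
    · intro n hn
      have hb : n ≤ 2 := by omega
      interval_cases n
      · exact h1
      · exact hcadj 1
      · exact hcadj 2
    · exact ha3.symm
    · intro n n' hlt hn' hcons hcl
      have hb : n < 4 := by omega
      interval_cases n <;> interval_cases n'
      · omega
      · exact ⟨fun hadj => hcase2 hadj, hane2⟩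
      · exact absurd ⟨rfl, rfl⟩ hcl
      · omega
      · exact ⟨hn13, hne13⟩
      · omega
  · -- induced C4 on c0, c1, c2, a
    exfalso
    have h4 := cycle_embedding_of (G := G) (by omega : 3 ≤ 4)
      (fun n => if n = 3 then a else c n) ?_ ?_ ?_
    · obtain ⟨emb⟩ := h4
      exact no_small_cycles hG (by omega) (by omega) emb
    · intro n hn
      have hb : n ≤ 2 := by omega
      interval_cases n
      · exact hcadj 0
      · exact hcadj 1
      · exact hcase2.symm
    · exact ha0.symm
    · intro n n' hlt hn' hcons hcl
      have hb : n < 4 := by omega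
      interval_cases n <;> interval_cases n'
      · omega
      · exact ⟨hn02, hne02⟩
      · exact absurd ⟨rfl, rfl⟩ hcl
      · omega
      · exact ⟨fun hadj => h1 hadj.symm, fun hcc => hane1 hcc.symm⟩
      · omega
  · -- induced C5 on c0, c1, c2, c3, a
    exfalso
    have h5 := cycle_embedding_of (G := G) (by omega : 3 ≤ 5)
      (fun n => if n = 4 then a else c n) ?_ ?_ ?_
    · obtain ⟨emb⟩ := h5
      exact no_small_cycles hG (by omega) (by omega) emb
    · intro n hn
      have hb : n ≤ 3 := by omega
      interval_cases n
      · exact hcadj 0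
      · exact hcadj 1
      · exact hcadj 2
      · exact ha3.symm
    · exact ha0.symm
    · intro n n' hlt hn' hcons hcl
      have hb : n < 5 := by omega
      interval_cases n <;> interval_cases n'
      · omega
      · exact ⟨hn02, hne02⟩
      · exact ⟨hn03, hne03⟩
      · exact absurd ⟨rfl, rfl⟩ hcl
      · omega
      · exact ⟨hn13, hne13⟩
      · exact ⟨fun hadj => h1 hadj.symm, fun hcc => hane1 hcc.symm⟩
      · omega
      · exact ⟨fun hadj => hcase2 hadj.symm, fun hcc => hane2 hcc.symm⟩
      · omega

end Shortcut

end PaperDefs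
namespace PaperDefs

section Main

variable {V : Type*} {G : SimpleGraph V}

lemma fan_of_long_cycle (hG : IsBridged G) :
    ∀ m : ℕ, 6 ≤ m → (cycleG m ↪g G) → Nonempty (fan3 ↪g G) := by
  intro m
  induction m using Nat.strong_induction_on with
  | _ m IH =>
  intro hm f
  classical
  have hconn := hG.1
  have hm2 : (2:ℕ) ≤ m := by omega
  obtain ⟨i₀, t, ht3, h2t, hst, hmin⟩ := bridged_shortcut hG hm f
  -- the c-path along the cycle
  set c : ℕ → V := fun j => f (i₀ + ((j : ℕ) : ZMod m)) with hc
  have hcadj : ∀ j : ℕ, G.Adj (c j) (c (j+1)) := by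
    intro j
    have := f.toHom.map_adj (cycleG_adj_succ hm2 (i₀ + ((j:ℕ) : ZMod m)))
    have h1 : (i₀ + ((j:ℕ) : ZMod m)) + 1 = i₀ + (((j+1 : ℕ)) : ZMod m) := by push_cast; ring
    rwa [h1] at this
  have harc : ∀ j j' : ℕ, j ≤ j' → j' - j < t → G.dist (c j) (c j') = j' - j := by
    intro j j' hjj hlt
    have := hmin (j' - j) hlt (i₀ + ((j:ℕ) : ZMod m))
    have h1 : (i₀ + ((j:ℕ) : ZMod m)) + (((j' - j : ℕ)) : ZMod m) = i₀ + ((j' : ℕ) : ZMod m) := by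
      push_cast [Nat.cast_sub hjj]; ring
    rwa [h1] at this
  by_cases ht : t = 3
  · -- 3-arc shortcut: direct fan
    subst ht
    have hge : 2 ≤ G.dist (f i₀) (f (i₀ + ((3:ℕ) : ZMod m))) := by
      apply dist_ge_two_of hconn
      · intro hcc
        exact ne_of_natCast_add (by omega) (by omega) i₀ (f.injective hcc)
      · intro hadj
        exact cycleG_not_adj (by omega) (by omega) i₀ (f.map_rel_iff.mp hadj)
    exact fan_of_arc3 hG hm f i₀ (fun i => hmin 2 (by omega) i) (by omega)
  have ht4 : 4 ≤ t := by omega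
  -- endpoints and geodesic
  set x := f i₀ with hx
  set y := f (i₀ + ((t:ℕ) : ZMod m)) with hy
  have hcx : c 0 = x := by simp [hc, hx]
  have hcy : c t = y := rfl
  set s := G.dist x y with hs
  have hslt : s < t := hst
  have hsge : t - 2 ≤ s := by
    have h1 : G.dist (c 1) (c t) = t - 1 := harc 1 t (by omega) (by omega)
    have h2 : G.dist (c 0) (c 1) = 1 := harc 0 1 (by omega) (by omega)
    have h3 : G.dist (c 1) (c 0) = 1 := by rw [SimpleGraph.dist_comm]; exact h2
    rw [hcx] at h3
    have htri : G.dist (c 1) (c t) ≤ G.dist (c 1) (c 0) + G.dist (c 0) (c t) :=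
      hconn.dist_triangle
    rw [hcy] at h1
    rw [hcx, hcy] at htri
    omega
  have hs2 : 2 ≤ s := by
    apply dist_ge_two_of hconn
    · intro hcc
      exact ne_of_natCast_add (by omega) (by omega) i₀ (f.injective hcc)
    · intro hadj
      exact cycleG_not_adj (by omega) (by omega) i₀ (f.map_rel_iff.mp hadj)
  obtain ⟨W, hW⟩ := hconn.exists_walk_length_eq_dist x y
  rw [← hs] at hW
  set p : ℕ → V := fun k => W.getVert k with hp
  have hpx : p 0 = x := W.getVert_zero
  have hpy : p s = y := by
    rw [hp]
    simp only
    rw [show s = W.length from hW.symm]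
    exact W.getVert_length
  have hpd : ∀ k, k ≤ s → G.dist x (p k) = k ∧ G.dist (p k) y = s - k := by
    intro k hk
    have := geodesic_getVert hconn W (by rw [hW]) (by omega : k ≤ W.length)
    rwa [hW] at this
  have hpadj : ∀ k, k < s → G.Adj (p k) (p (k+1)) := by
    intro k hk
    exact W.adj_getVert_succ (by omega)
  -- separation facts
  have hp_sep : ∀ k k' : ℕ, k ≤ k' → k' ≤ s → 2 ≤ k' - k →
      ¬ G.Adj (p k) (p k') ∧ p k ≠ p k' := by
    intro k k' h1 h2 h3
    apply dist_ge_two hconn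
    have d1 := (hpd k (by omega)).1
    have d2 := (hpd k' h2).1
    have htri : G.dist x (p k') ≤ G.dist x (p k) + G.dist (p k) (p k') := hconn.dist_triangle
    omega
  have hc_sep : ∀ j j' : ℕ, j ≤ j' → j' - j < t → 2 ≤ j' - j →
      ¬ G.Adj (c j) (c j') ∧ c j ≠ c j' := by
    intro j j' h1 h2 h3
    apply dist_ge_two hconn
    rw [harc j j' h1 h2]
    omega
  have hF4 : ∀ k j : ℕ, k ≤ s → 1 ≤ j → j ≤ t - 1 → p k ≠ c j := by
    intro k j hk hj1 hj2 he
    have d1 := (hpd k hk).1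
    have d2 := (hpd k hk).2
    have d3 : G.dist x (c j) = j := by
      rw [← hcx]; exact harc 0 j (by omega) (by omega)
    have d4 : G.dist (c j) y = t - j := by
      rw [← hcy]; exact harc j t (by omega) (by omega)
    rw [he] at d1 d2
    omega
  -- rung shape
  have hrung : ∀ k j : ℕ, k ≤ s → 1 ≤ j → j ≤ t - 1 → G.Adj (p k) (c j) →
      (k + j) / 2 = k ∧ (k + j) - (k + j) / 2 = j := by
    intro k j hk hj1 hj2 hadj
    have hd1 : G.dist (p k) (c j) ≤ 1 := adj_dist_le_one hconn hadj
    have hd1' : G.dist (c j) (p k) ≤ 1 := by rw [SimpleGraph.dist_comm]; exact hd1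
    have d1 := (hpd k hk).1
    have d2 := (hpd k hk).2
    have d3 : G.dist x (c j) = j := by
      rw [← hcx]; exact harc 0 j (by omega) (by omega)
    have d4 : G.dist (c j) y = t - j := by
      rw [← hcy]; exact harc j t (by omega) (by omega)
    have t1 : G.dist x (c j) ≤ G.dist x (p k) + G.dist (p k) (c j) := hconn.dist_triangle
    have t2 : G.dist x (p k) ≤ G.dist x (c j) + G.dist (c j) (p k) := hconn.dist_triangle
    have t3 : G.dist (c j) y ≤ G.dist (c j) (p k) + G.dist (p k) y := hconn.dist_triangle
    have t4 : G.dist (p k) y ≤ G.dist (p k) (c j) + G.dist (c j) y := hconn.dist_triangle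
    omega
  -- the rung predicate
  set NN : ℕ → Prop := fun ν => G.Adj (p (ν / 2)) (c (ν - ν / 2)) with hNN
  have hN1 : NN 1 := by
    show G.Adj (p (1/2)) (c (1 - 1/2))
    have e1 : (1:ℕ)/2 = 0 := by omega
    have e2 : (1:ℕ) - 1/2 = 1 := by omega
    rw [e2, e1, hpx, ← hcx]
    exact hcadj 0
  have hNmax : NN (s + t - 1) := by
    show G.Adj (p ((s+t-1) / 2)) (c ((s+t-1) - (s+t-1) / 2))
    have e1 : (s+t-1)/2 = s := by omega
    have e2 : (s+t-1) - (s+t-1)/2 = t - 1 := by omega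
    rw [e2, e1, hpy, ← hcy]
    have := hcadj (t-1)
    have e3 : t - 1 + 1 = t := by omega
    rw [e3] at this
    exact this.symm
  by_cases hall : ∀ ν : ℕ, 1 ≤ ν → ν ≤ s + t - 1 → NN ν
  · -- everything triangulated: fan around p 1
    have hN2 : G.Adj (p 1) (c 1) := by
      have := hall 2 (by omega) (by omega)
      simpa [hNN] using this
    have hN3 : G.Adj (p 1) (c 2) := by
      have := hall 3 (by omega) (by omega)
      simpa [hNN] using this
    have hN4 : G.Adj (p 2) (c 2) := by
      have := hall 4 (by omega) (by omega)
      simpa [hNN] using this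
    refine fan_of (v0 := p 0) (v1 := c 1) (v2 := c 2) (v3 := p 2) (a := p 1)
      ?_ (hcadj 1) hN4.symm (hpadj 0 (by omega)).symm hN2 hN3 (hpadj 1 (by omega))
      ?_ ?_ ?_ ?_ ?_ ?_
    · rw [hpx, ← hcx]; exact hcadj 0
    · rw [hpx, ← hcx]
      exact (hc_sep 0 2 (by omega) (by omega) (by omega)).1
    · exact (hp_sep 0 2 (by omega) (by omega) (by omega)).1
    · intro hadj
      have := hrung 2 1 (by omega) (by omega) (by omega) hadj.symm
      omega
    · rw [hpx, ← hcx]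
      exact (hc_sep 0 2 (by omega) (by omega) (by omega)).2
    · exact (hp_sep 0 2 (by omega) (by omega) (by omega)).2
    · exact fun he => hF4 2 1 (by omega) (by omega) (by omega) he.symm
  · -- a missing rung: extract a shorter induced cycle
    push_neg at hall
    obtain ⟨ν', hν'1, hν'max, hν'not⟩ := hall
    have hν'ne1 : ν' ≠ 1 := fun h => hν'not (h ▸ hN1)
    have hν'nemax : ν' ≠ s + t - 1 := fun h => hν'not (h ▸ hNmax)
    -- largest rung below ν'
    set ν₁ := Nat.findGreatest NN (ν' - 1) with hν₁def
    have hν₁N : NN ν₁ := by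
      apply Nat.findGreatest_spec (m := 1) (by omega) hN1
    have hν₁ge1 : 1 ≤ ν₁ := Nat.le_findGreatest (by omega) hN1
    have hν₁lt : ν₁ ≤ ν' - 1 := Nat.findGreatest_le _
    have hν₁greatest : ∀ ν, ν₁ < ν → ν ≤ ν' - 1 → ¬ NN ν := by
      intro ν h1 h2
      exact Nat.findGreatest_is_greatest h1 h2
    -- smallest rung above ν'
    have hex : ∃ ν, ν' < ν ∧ NN ν := ⟨s + t - 1, by omega, hNmax⟩
    set ν₂ := Nat.find hex with hν₂def
    obtain ⟨hν₂gt, hν₂N⟩ := Nat.find_spec hex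
    have hν₂le : ν₂ ≤ s + t - 1 := Nat.find_min' hex ⟨by omega, hNmax⟩
    have hν₂least : ∀ ν, ν' < ν → ν < ν₂ → ¬ NN ν := by
      intro ν h1 h2 hN
      exact (Nat.find_min hex h2) ⟨h1, hN⟩
    -- no rungs strictly between
    have hgap : ∀ ν, ν₁ < ν → ν < ν₂ → ¬ NN ν := by
      intro ν h1 h2
      rcases Nat.lt_or_ge ν ν' with h | h
      · exact hν₁greatest ν h1 (by omega)
      · rcases Nat.eq_or_lt_of_le h with h' | h'
        · rw [← h']; exact hν'not
        · exact hν₂least ν h' h2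
    have hν₁₂ : ν₁ + 2 ≤ ν₂ := by omega
    set k1 := ν₁ / 2 with hk1
    set j1 := ν₁ - ν₁ / 2 with hj1
    set k2 := ν₂ / 2 with hk2
    set j2 := ν₂ - ν₂ / 2 with hj2
    have hts : t ≤ s + 2 := by omega
    have hk2s : k2 ≤ s := by omega
    have hj2t : j2 ≤ t - 1 := by omega
    have hj11 : 1 ≤ j1 := by omega
    have hkk : k1 < k2 := by omega
    have hjj : j1 < j2 := by omega
    set K := k2 - k1 with hK
    set u : ℕ → V := fun n => if n ≤ K then p (k1 + n) else c (j2 + K + 1 - n) with hu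
    have hL3 : 3 ≤ ν₂ - ν₁ + 2 := by omega
    have hLval : ν₂ - ν₁ + 2 = K + (j2 - j1) + 2 := by omega
    have hcyc := cycle_embedding_of (G := G) (L := ν₂ - ν₁ + 2) hL3 u ?_ ?_ ?_
    · obtain ⟨emb⟩ := hcyc
      rcases Nat.lt_or_ge (ν₂ - ν₁ + 2) 6 with hL | hL
      · exact (no_small_cycles hG (by omega) (by omega) emb).elim
      · exact IH (ν₂ - ν₁ + 2) (by omega) (by omega) emb
    · -- consecutive adjacencies
      intro n hn
      simp only [hu]
      split_ifs with h1 h2 h2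
      · have e : k1 + (n+1) = (k1 + n) + 1 := by omega
        rw [e]
        exact hpadj (k1 + n) (by omega)
      · -- crossing edge: n = K
        have e1 : k1 + n = k2 := by omega
        have e2 : j2 + K + 1 - (n+1) = j2 := by omega
        rw [e1, e2]
        exact hν₂N
      · omega
      · -- c-side edge
        have hA1 : 1 ≤ j2 + K + 1 - n := by omega
        have e : j2 + K + 1 - (n + 1) = (j2 + K + 1 - n) - 1 := by omega
        rw [e]
        have := hcadj ((j2 + K + 1 - n) - 1)
        have e2 : (j2 + K + 1 - n) - 1 + 1 = j2 + K + 1 - n := by omega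
        rw [e2] at this
        exact this.symm
    · -- closing edge
      simp only [hu]
      have hL1 : ¬ (ν₂ - ν₁ + 2 - 1 ≤ K) := by omega
      rw [if_neg hL1, if_pos (by omega : (0:ℕ) ≤ K)]
      have e1 : j2 + K + 1 - (ν₂ - ν₁ + 2 - 1) = j1 := by omega
      have e2 : k1 + 0 = k1 := by omega
      rw [e1, e2]
      exact hν₁N.symm
    · -- non-adjacency of non-consecutive pairs
      intro n n' hlt hn' hcons hcl
      simp only [hu]
      split_ifs with h1 h2 h2
      · -- both on the geodesic
        exact hp_sep (k1 + n) (k1 + n') (by omega) (by omega) (by omega)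
      · -- mixed pair
        constructor
        · intro hadj
          obtain ⟨e1, e2⟩ := hrung (k1 + n) (j2 + K + 1 - n') (by omega) (by omega)
            (by omega) hadj
          have hNν : NN ((k1 + n) + (j2 + K + 1 - n')) := by
            show G.Adj (p (((k1 + n) + (j2 + K + 1 - n')) / 2))
              (c (((k1 + n) + (j2 + K + 1 - n')) - ((k1 + n) + (j2 + K + 1 - n')) / 2))
            rw [e2, e1]
            exact hadj
          have hcase : (k1 + n) + (j2 + K + 1 - n') = ν₁ ∨
              (k1 + n) + (j2 + K + 1 - n') = ν₂ := by
            by_contra hno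
            push_neg at hno
            exact hgap _ (by omega) (by omega) hNν
          rcases hcase with hce | hce
          · exact hcl ⟨by omega, by omega⟩
          · exact hcons (by omega)
        · exact hF4 (k1 + n) (j2 + K + 1 - n') (by omega) (by omega) (by omega)
      · omega
      · -- both on the cycle arc
        have hsw := hc_sep (j2 + K + 1 - n') (j2 + K + 1 - n) (by omega) (by omega) (by omega)
        exact ⟨fun h => hsw.1 h.symm, fun h => hsw.2 h.symm⟩

end Main

end PaperDefs
theorem statement0 {V : Type*} (G : SimpleGraph V) (hG : IsBridged G)
    (n : ℕ) (hn : 3 < n) (f : cycleG n ↪g G) :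
    Nonempty (fan3 ↪g G) := by
  rcases Nat.lt_or_ge n 6 with h | h
  · exact (no_small_cycles hG (by omega) (by omega) f).elim
  · exact fan_of_long_cycle hG n h f
end

section
/- Let R be a connected chordal graph containing no induced subgraph isomorphic to a 3-fan. Then every metric triangle u,v,w in R satisfies d(u,v) = d(v,w) = d(w,u) ≤ 1; that is, either u=v=w or u,v,w are pairwise adjacent. -/
open SimpleGraph

/-!
Chordality yields, for every base vertex `u`, the triangle condition (adjacent `v, w` with
`d(u,v) = d(u,w) ≥ 1` have a common neighbour closer to `u`) and a strong quadrangle condition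
(two vertices at distance `k` from `u` with a common neighbour at distance `k + 1` are equal or
adjacent): otherwise a shortest detour through vertices closer to `u` would close up to an
induced cycle of length at least four. From these, if `d(u,v) < d(u,w)` then `w` has a neighbour
on geodesics to both `u` and `v`; so metric triangles are equilateral, balls are convex, and in a
metric triangle `u v w` all of `I(u,v)` lies at distance `d(u,w)` from `w`.

Given a metric triangle of size `k ≥ 2`, shrinking `u, x, w` along geodesics, where `x ∈ I(u,v)`
is at distance 2 from `u`, yields a metric triangle of size exactly 2. In one of those, `u v w`,
with `m` a common neighbour of `u, v`, the triangle condition towards `w` gives neighbours `t` of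
`v, m` and `t'` of `u, m` adjacent to `w`; the quadrangle condition makes `t t'` an edge, and the
path `v t t' u` with hub `m` is an induced 3-fan.
-/

theorem ZMod.sub_eq_one_iff_val {n : ℕ} (hn : 1 ≤ n) {a b : ZMod (n + 1)} :
    a - b = 1 ↔ a.val = b.val + 1 ∨ (a.val = 0 ∧ b.val = n) := by
  have : Fact (1 < n + 1) := ⟨by omega⟩
  rw [sub_eq_iff_eq_add', ← (ZMod.val_injective _).eq_iff, ZMod.val_add, ZMod.val_one]
  have := ZMod.val_lt a
  have := ZMod.val_lt b
  rcases Nat.lt_or_ge (b.val + 1) (n + 1) with hb | hb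
  · rw [Nat.mod_eq_of_lt hb]; omega
  · rw [show b.val + 1 = n + 1 by omega, Nat.mod_self]; omega

namespace SimpleGraph

variable {V : Type*} {G : SimpleGraph V}

theorem Walk.not_adj_getVert_of_length_eq_dist {u v : V} (p : G.Walk u v)
    (hp : p.length = G.dist u v) {i j : ℕ} (hij : i + 1 < j) (hj : j ≤ p.length) :
    ¬ G.Adj (p.getVert i) (p.getVert j) := fun h => by
  have := dist_le ((p.take i).append (.cons h (p.drop j)))
  simp only [Walk.length_append, Walk.length_cons, Walk.take_length, Walk.drop_length] at this
  omega

theorem Walk.eq_or_dist_lt_of_mem_support {u v x : V} (p : G.Walk u v)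
    (hp : p.length = G.dist u v) (hx : x ∈ p.support) : x = v ∨ G.dist u x < G.dist u v := by
  classical
  have hlen := congrArg Walk.length (p.take_spec hx)
  rw [Walk.length_append] at hlen
  have := dist_le (p.takeUntil x hx)
  by_cases h0 : (p.dropUntil x hx).length = 0
  · exact .inl (Walk.eq_of_length_eq_zero h0)
  · right; omega

theorem dist_le_one_of_eq_or_adj {v w : V} (h : v = w ∨ G.Adj v w) : G.dist v w ≤ 1 := by
  rcases h with rfl | h
  · simp
  · exact (dist_eq_one_iff_adj.mpr h).le

theorem Connected.exists_dist_eq_of_le (hconn : G.Connected) {u v : V}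
    {k : ℕ} (hk : k ≤ G.dist u v) :
    ∃ x, G.dist u x = k ∧ G.dist u x + G.dist x v = G.dist u v := by
  obtain ⟨p, hp⟩ := hconn.exists_walk_length_eq_dist u v
  have h1 := dist_le (p.take k)
  have h2 := dist_le (p.drop k)
  have := hconn.dist_triangle (u := u) (v := p.getVert k) (w := v)
  simp only [Walk.take_length, Walk.drop_length] at h1 h2
  exact ⟨p.getVert k, by omega, by omega⟩

theorem Connected.exists_walk_closer_of_dist_eq (hconn : G.Connected) {u v w : V} (hvw : v ≠ w)
    (h : G.dist u v = G.dist u w) :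
    ∃ p : G.Walk v w, s(v, w) ∉ p.edges ∧
      ∀ x ∈ p.support, x = v ∨ x = w ∨ G.dist u x < G.dist u v := by
  obtain ⟨P, hP⟩ := hconn.exists_walk_length_eq_dist u v
  obtain ⟨Q, hQ⟩ := hconn.exists_walk_length_eq_dist u w
  refine ⟨P.reverse.append Q, fun he => ?_, fun x hx => ?_⟩
  · rcases List.mem_append.mp (Walk.edges_append _ _ ▸ he) with he | he
    · rcases P.eq_or_dist_lt_of_mem_support hP
        (by simpa using P.reverse.snd_mem_support_of_mem_edges he) with h' | h'
      · exact hvw h'.symm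
      · omega
    · rcases Q.eq_or_dist_lt_of_mem_support hQ (Q.fst_mem_support_of_mem_edges he) with h' | h'
      · exact hvw h'
      · omega
  · rcases (Walk.mem_support_append_iff _ _).mp hx with hx | hx
    · rcases P.eq_or_dist_lt_of_mem_support hP (by simpa using hx) with h' | h' <;> tauto
    · rcases Q.eq_or_dist_lt_of_mem_support hQ hx with h' | h'
      · tauto
      · right; right; omega

end SimpleGraph

namespace PaperDefs

variable {V : Type*} {G : SimpleGraph V}

theorem cycleG_adj_iff {n : ℕ} (hn : 1 ≤ n) {i j : ZMod (n + 1)} :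
    (cycleG (n + 1)).Adj i j ↔ j.val = i.val + 1 ∨ i.val = j.val + 1 ∨
      (i.val = 0 ∧ j.val = n) ∨ (j.val = 0 ∧ i.val = n) := by
  show i ≠ j ∧ (i - j = 1 ∨ j - i = 1) ↔ _
  rw [ZMod.sub_eq_one_iff_val hn, ZMod.sub_eq_one_iff_val hn, ← ZMod.val_injective _ |>.ne_iff]
  omega

theorem Chordal.false_of_induced_cycle (hch : Chordal G) {f : ℕ → V} {n : ℕ} (hn : 3 ≤ n)
    (hinj : Set.InjOn f {i | i ≤ n})
    (hadj : ∀ i j, i < j → j ≤ n →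
      (G.Adj (f i) (f j) ↔ j = i + 1 ∨ (i = 0 ∧ j = n))) :
    False := by
  have hadj' : ∀ i j : ZMod (n + 1),
      G.Adj (f i.val) (f j.val) ↔ (cycleG (n + 1)).Adj i j := by
    intro i j
    have hi := ZMod.val_lt i
    have hj := ZMod.val_lt j
    rw [cycleG_adj_iff (by omega)]
    rcases lt_trichotomy i.val j.val with hij | hij | hij
    · rw [hadj _ _ hij (by omega)]; omega
    · rw [hij]; simp only [G.loopless.irrefl, false_iff]; omega
    · rw [G.adj_comm, hadj _ _ hij (by omega)]; omega
  have hf : Function.Injective fun i : ZMod (n + 1) => f i.val := fun i j hij =>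
    ZMod.val_injective _ <|
      hinj (Nat.lt_succ_iff.mp (ZMod.val_lt i)) (Nat.lt_succ_iff.mp (ZMod.val_lt j)) hij
  exact (hch (n + 1) (by omega)).false ⟨⟨_, hf⟩, hadj' _ _⟩

theorem Chordal.length_le_two_of_length_eq_dist (hch : Chordal G) {H : SimpleGraph V}
    (hHG : H ≤ G) {v w : V} (hvw : G.Adj v w) (q : H.Walk v w) (hq : q.length = H.dist v w)
    (hchord : ∀ i j, i + 1 < j → j ≤ q.length → G.Adj (q.getVert i) (q.getVert j) →
      H.Adj (q.getVert i) (q.getVert j) ∨ (i = 0 ∧ j = q.length)) :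
    q.length ≤ 2 := by
  by_contra! h3
  refine hch.false_of_induced_cycle h3 (q.isPath_of_length_eq_dist hq).getVert_injOn
    fun i j hij hj => ⟨fun hG => ?_, ?_⟩
  · by_contra hne
    rcases hchord i j (by omega) hj hG with hH | h0
    · exact q.not_adj_getVert_of_length_eq_dist hq (by omega) hj hH
    · exact hne (.inr h0)
  · rintro (rfl | ⟨rfl, rfl⟩)
    · exact hHG (q.adj_getVert_succ (by omega))
    · simpa using hvw

theorem Chordal.exists_common_neighbor_of_walk (hch : Chordal G) {v w : V} (hvw : G.Adj v w)
    (p : G.Walk v w) (hp : s(v, w) ∉ p.edges) :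
    ∃ x ∈ p.support, x ≠ v ∧ x ≠ w ∧ G.Adj v x ∧ G.Adj x w := by
  -- a shortest `v`-`w` path in the subgraph induced on `p.support` with the edge `vw` removed
  -- closes up with `vw` to an induced cycle, which must therefore be a triangle
  let H : SimpleGraph V :=
    { Adj a b := G.Adj a b ∧ a ∈ p.support ∧ b ∈ p.support ∧ s(a, b) ≠ s(v, w)
      symm := ⟨fun a b ⟨h, ha, hb, hne⟩ => ⟨h.symm, hb, ha, by rwa [Sym2.eq_swap]⟩⟩
      loopless := ⟨fun a h => G.loopless.irrefl a h.1⟩ }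
  have hreach : H.Reachable v w := ⟨p.transfer H fun e he => by
    induction e using Sym2.ind with
    | _ a b => exact ⟨p.adj_of_mem_edges he, p.fst_mem_support_of_mem_edges he,
        p.snd_mem_support_of_mem_edges he, fun h => hp (h ▸ he)⟩⟩
  obtain ⟨q, hq⟩ := hreach.exists_walk_length_eq_dist
  have hqinj := (q.isPath_of_length_eq_dist hq).getVert_injOn
  have hsupp : ∀ i ≤ q.length, q.getVert i ∈ p.support := by
    rintro (_ | i) hi
    · simp
    · exact (q.adj_getVert_succ (by omega)).2.2.1
  have hlen : 2 ≤ q.length :=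
    hq ▸ hreach.one_lt_dist_of_ne_of_not_adj hvw.ne fun h => h.2.2.2 rfl
  have hlen' := hch.length_le_two_of_length_eq_dist (H := H) (fun _ _ h => h.1) hvw q hq
    fun i j hij hj hG => by
      by_cases h0 : i = 0 ∧ j = q.length
      · exact .inr h0
      refine .inl ⟨hG, hsupp i (by omega), hsupp j hj, fun he => h0 ?_⟩
      rcases Sym2.eq_iff.mp he with ⟨hi, hj'⟩ | ⟨hi, -⟩
      · exact ⟨hqinj (by simp; omega) (by simp) (hi.trans q.getVert_zero.symm),
          hqinj (by simp; omega) (by simp) (hj'.trans q.getVert_length.symm)⟩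
      · have := hqinj (by simp; omega) (by simp) (hi.trans q.getVert_length.symm)
        omega
  have hv : H.Adj v (q.getVert 1) := by simpa using q.adj_getVert_succ (i := 0) (by omega)
  have hw : H.Adj (q.getVert 1) w := by
    have h2 : q.getVert 2 = w := by rw [show 2 = q.length by omega]; exact q.getVert_length
    simpa [h2] using q.adj_getVert_succ (i := 1) (by omega)
  exact ⟨q.getVert 1, hsupp 1 (by omega), hv.ne.symm, hw.ne, hv.1, hw.1⟩

theorem Chordal.exists_common_neighbor_closer (hconn : G.Connected) (hch : Chordal G)
    {u v w : V} (hvw : G.Adj v w) (h : G.dist u v = G.dist u w) :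
    ∃ x, G.Adj v x ∧ G.Adj x w ∧ G.dist u x + 1 = G.dist u v := by
  obtain ⟨p, hp, hsupp⟩ := hconn.exists_walk_closer_of_dist_eq hvw.ne h
  obtain ⟨x, hx, hxv, hxw, hvx, hxw'⟩ := hch.exists_common_neighbor_of_walk hvw p hp
  have hlt : G.dist u x < G.dist u v := by simpa [hxv, hxw] using hsupp x hx
  have := hconn.dist_triangle (u := u) (v := x) (w := v)
  rw [dist_comm (u := x), dist_eq_one_iff_adj.mpr hvx] at this
  exact ⟨x, hvx, hxw', by omega⟩

theorem Chordal.eq_or_adj_of_common_neighbor_farther (hconn : G.Connected) (hch : Chordal G)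
    {u v w z : V} (h : G.dist u v = G.dist u w) (hz : G.dist u z = G.dist u v + 1)
    (hzv : G.Adj z v) (hzw : G.Adj z w) : v = w ∨ G.Adj v w := by
  by_cases hvw : v = w
  · exact .inl hvw
  obtain ⟨p, -, hsupp⟩ := hconn.exists_walk_closer_of_dist_eq hvw h
  have hzp : z ∉ p.support := fun hz' => by
    rcases hsupp z hz' with rfl | rfl | hlt
    · exact hzv.ne rfl
    · exact hzw.ne rfl
    · omega
  have hp' : s(v, z) ∉ (p.concat hzw.symm).edges := by
    rw [Walk.edges_concat, List.concat_eq_append, List.mem_append, List.mem_singleton,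
      Sym2.eq_iff]
    rintro (he | ⟨rfl, -⟩ | ⟨rfl, -⟩)
    · exact hzp (p.snd_mem_support_of_mem_edges he)
    · exact hvw rfl
    · exact hzv.ne rfl
  obtain ⟨x, hx, hxv, hxz, hvx, hxz'⟩ :=
    hch.exists_common_neighbor_of_walk hzv.symm (p.concat hzw.symm) hp'
  rw [Walk.support_concat, List.mem_append, List.mem_singleton] at hx
  rcases hx with hx | rfl
  · rcases hsupp x hx with rfl | rfl | hlt
    · exact absurd rfl hxv
    · exact .inr hvx
    · have := hconn.dist_triangle (u := u) (v := x) (w := z)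
      rw [dist_eq_one_iff_adj.mpr hxz'] at this
      omega
  · exact absurd rfl hxz

theorem Chordal.exists_adj_toward_of_dist_lt (hconn : G.Connected) (hch : Chordal G)
    {u v w : V} (h : G.dist u v < G.dist u w) :
    ∃ z, G.Adj w z ∧ G.dist u z + 1 = G.dist u w ∧ G.dist z v + 1 = G.dist w v := by
  induction hn : G.dist w v using Nat.strong_induction_on generalizing w with
  | _ a IH =>
  have hvw : v ≠ w := by rintro rfl; omega
  have := hconn.dist_triangle (u := u) (v := w) (w := v)
  have := hconn.dist_triangle (u := u) (v := v) (w := w)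
  have : G.dist v w = G.dist w v := dist_comm
  obtain ⟨x, hwx1, hxv⟩ := hconn.exists_dist_eq_of_le (u := w) (v := v) (k := 1)
    (by have := hconn.pos_dist_of_ne hvw.symm; omega)
  have hwx := dist_eq_one_iff_adj.mp hwx1
  have hxw1 : G.dist x w = 1 := dist_comm.trans hwx1
  have := hconn.dist_triangle (u := u) (v := w) (w := x)
  have := hconn.dist_triangle (u := u) (v := x) (w := w)
  rcases Nat.lt_or_ge (G.dist u x) (G.dist u w) with hlt | hge
  · exact ⟨x, hwx, by omega, by omega⟩
  by_cases ha : a = 1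
  · exact ⟨v, dist_eq_one_iff_adj.mp (hn.trans ha), by omega, by simp [ha]⟩
  obtain ⟨z', hxz', hz'u, hz'v⟩ := IH (G.dist x v) (by omega) (w := x) (by omega) rfl
  have := hconn.dist_triangle (u := w) (v := z') (w := v)
  rcases hge.eq_or_lt with heq | hgt
  · obtain ⟨y, hwy, hyx, hyu⟩ := hch.exists_common_neighbor_closer hconn hwx heq
    have := dist_le_one_of_eq_or_adj <| hch.eq_or_adj_of_common_neighbor_farther hconn
      (u := u) (v := y) (w := z') (z := x) (by omega) (by omega) hyx.symm hxz'
    have := hconn.dist_triangle (u := y) (v := z') (w := v)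
    have := hconn.dist_triangle (u := w) (v := y) (w := v)
    have := dist_eq_one_iff_adj.mpr hwy
    exact ⟨y, hwy, hyu, by omega⟩
  · have := dist_le_one_of_eq_or_adj <| hch.eq_or_adj_of_common_neighbor_farther hconn
      (u := u) (v := w) (w := z') (z := x) (by omega) (by omega) hwx.symm hxz'
    omega

theorem interval_comm (u v : V) : interval G u v = interval G v u := by
  ext x
  change _ = _ ↔ _ = _
  rw [dist_comm (u := v) (v := u), dist_comm (u := v) (v := x), dist_comm (u := x) (v := u)]
  omega

theorem left_mem_interval (u v : V) : u ∈ interval G u v := by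
  simp [interval]

theorem right_mem_interval (u v : V) : v ∈ interval G u v := by
  simp [interval]

theorem Chordal.dist_le_of_mem_interval (hconn : G.Connected) (hch : Chordal G)
    {u v w x : V} {r : ℕ} (hu : G.dist w u ≤ r) (hv : G.dist w v ≤ r)
    (hx : x ∈ interval G u v) : G.dist w x ≤ r := by
  by_contra! hr
  obtain ⟨z, hxz, hzw, hzu⟩ :=
    hch.exists_adj_toward_of_dist_lt hconn (u := w) (v := u) (w := x) (by omega)
  obtain ⟨z', hxz', hz'w, hz'v⟩ :=
    hch.exists_adj_toward_of_dist_lt hconn (u := w) (v := v) (w := x) (by omega)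
  have := dist_le_one_of_eq_or_adj <| hch.eq_or_adj_of_common_neighbor_farther hconn
    (u := w) (v := z) (w := z') (z := x) (by omega) (by omega) hxz hxz'
  have := hconn.dist_triangle (u := u) (v := z) (w := v)
  have := hconn.dist_triangle (u := z) (v := z') (w := v)
  have : G.dist u z = G.dist z u := dist_comm
  have : G.dist u x = G.dist x u := dist_comm
  have hx' : G.dist u x + G.dist x v = G.dist u v := hx
  omega

theorem MetricTriangle.rotate {u v w : V} (h : MetricTriangle G u v w) :
    MetricTriangle G v w u :=
  ⟨h.2.1, h.2.2, h.1⟩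

theorem MetricTriangle.swap {u v w : V} (h : MetricTriangle G u v w) :
    MetricTriangle G u w v := by
  obtain ⟨h₁, h₂, h₃⟩ := h
  unfold MetricTriangle
  rw [interval_comm u w, interval_comm w v, interval_comm v u]
  exact ⟨Set.inter_comm _ _ ▸ h₂, Set.inter_comm _ _ ▸ h₁, Set.inter_comm _ _ ▸ h₃⟩

theorem MetricTriangle.eq_of_mem_interval {u v w x : V} (h : MetricTriangle G u v w)
    (hwu : x ∈ interval G w u) (huv : x ∈ interval G u v) : x = u :=
  h.2.2.subset ⟨hwu, huv⟩

theorem dist_eq_add_of_mem_interval_inter (hconn : G.Connected) {p q r a b c t : V}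
    (h₁ : G.dist p q = G.dist p a + G.dist a b + G.dist b q)
    (h₂ : G.dist q r = G.dist q b + G.dist b c + G.dist c r)
    (hab : t ∈ interval G a b) (hbc : t ∈ interval G b c) (htb : t ≠ b) :
    G.dist p q = G.dist p a + G.dist a t + G.dist t q ∧
      G.dist q r = G.dist q t + G.dist t c + G.dist c r ∧
      G.dist a t + G.dist t c < G.dist a b + G.dist b c := by
  have hab' : G.dist a t + G.dist t b = G.dist a b := hab
  have hbc' : G.dist b t + G.dist t c = G.dist b c := hbc
  have : G.dist t b = G.dist b t := dist_comm
  have := hconn.pos_dist_of_ne htb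
  have := hconn.dist_triangle (u := t) (v := b) (w := q)
  have := hconn.dist_triangle (u := p) (v := a) (w := t)
  have := hconn.dist_triangle (u := p) (v := t) (w := q)
  have := hconn.dist_triangle (u := q) (v := b) (w := t)
  have := hconn.dist_triangle (u := t) (v := c) (w := r)
  have := hconn.dist_triangle (u := q) (v := t) (w := r)
  omega

theorem exists_metricTriangle_spanning (hconn : G.Connected) (p q r : V) :
    ∃ a b c, MetricTriangle G a b c ∧
      G.dist p q = G.dist p a + G.dist a b + G.dist b q ∧
      G.dist q r = G.dist q b + G.dist b c + G.dist c r ∧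
      G.dist r p = G.dist r c + G.dist c a + G.dist a p := by
  classical
  -- among triples lying on geodesics between `p, q, r` as below, one of minimal perimeter
  -- is a metric triangle: a common interior point of two sides would shorten it
  have hex : ∃ n, ∃ a b c : V,
      (G.dist p q = G.dist p a + G.dist a b + G.dist b q ∧
        G.dist q r = G.dist q b + G.dist b c + G.dist c r ∧
        G.dist r p = G.dist r c + G.dist c a + G.dist a p) ∧
      G.dist a b + G.dist b c + G.dist c a = n :=
    ⟨_, p, q, r, by simp, rfl⟩
  obtain ⟨a, b, c, ⟨h₁, h₂, h₃⟩, hper⟩ := Nat.find_spec hex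
  refine ⟨a, b, c, ⟨?_, ?_, ?_⟩, h₁, h₂, h₃⟩
  · refine Set.eq_singleton_iff_unique_mem.mpr
      ⟨⟨right_mem_interval a b, left_mem_interval b c⟩, fun t ⟨hab, hbc⟩ => ?_⟩
    by_contra htb
    obtain ⟨n₁, n₂, n₃⟩ := dist_eq_add_of_mem_interval_inter hconn h₁ h₂ hab hbc htb
    exact Nat.find_min hex (m := G.dist a t + G.dist t c + G.dist c a) (by omega)
      ⟨a, t, c, ⟨n₁, n₂, h₃⟩, rfl⟩
  · refine Set.eq_singleton_iff_unique_mem.mpr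
      ⟨⟨right_mem_interval b c, left_mem_interval c a⟩, fun t ⟨hbc, hca⟩ => ?_⟩
    by_contra htc
    obtain ⟨n₁, n₂, n₃⟩ := dist_eq_add_of_mem_interval_inter hconn h₂ h₃ hbc hca htc
    exact Nat.find_min hex (m := G.dist a b + G.dist b t + G.dist t a) (by omega)
      ⟨a, b, t, ⟨h₁, n₁, n₂⟩, rfl⟩
  · refine Set.eq_singleton_iff_unique_mem.mpr
      ⟨⟨right_mem_interval c a, left_mem_interval a b⟩, fun t ⟨hca, hab⟩ => ?_⟩
    by_contra hta
    obtain ⟨n₁, n₂, n₃⟩ := dist_eq_add_of_mem_interval_inter hconn h₃ h₁ hca hab hta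
    exact Nat.find_min hex (m := G.dist t b + G.dist b c + G.dist c t) (by omega)
      ⟨t, b, c, ⟨n₂, h₂, n₁⟩, rfl⟩

theorem Chordal.dist_le_dist_of_metricTriangle (hconn : G.Connected) (hch : Chordal G)
    {u v w : V} (h : MetricTriangle G u v w) : G.dist u w ≤ G.dist u v := by
  by_contra! hlt
  obtain ⟨z, hwz, hzu, hzv⟩ := hch.exists_adj_toward_of_dist_lt hconn hlt
  have hz : z = w := h.rotate.rotate.eq_of_mem_interval
    (show G.dist v z + G.dist z w = G.dist v w by
      rw [dist_comm (u := v) (v := z), dist_comm (u := z) (v := w), dist_comm (u := v) (v := w),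
        dist_eq_one_iff_adj.mpr hwz]; omega)
    (show G.dist w z + G.dist z u = G.dist w u by
      rw [dist_comm (u := z) (v := u), dist_comm (u := w) (v := u),
        dist_eq_one_iff_adj.mpr hwz]; omega)
  exact hwz.ne hz.symm

theorem Chordal.dist_eq_of_metricTriangle (hconn : G.Connected) (hch : Chordal G)
    {u v w : V} (h : MetricTriangle G u v w) :
    G.dist u v = G.dist v w ∧ G.dist v w = G.dist w u := by
  have h₁ := hch.dist_le_dist_of_metricTriangle hconn h
  have h₂ := hch.dist_le_dist_of_metricTriangle hconn h.swap
  have h₃ := hch.dist_le_dist_of_metricTriangle hconn h.rotate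
  have h₄ := hch.dist_le_dist_of_metricTriangle hconn h.rotate.swap
  rw [dist_comm (u := v) (v := u)] at h₃ h₄
  rw [dist_comm (u := w) (v := u)]
  omega

theorem Chordal.dist_eq_of_mem_interval_of_metricTriangle (hconn : G.Connected)
    (hch : Chordal G) {u v w x : V} (h : MetricTriangle G u v w) (hx : x ∈ interval G u v) :
    G.dist w x = G.dist w u := by
  obtain ⟨e₁, e₂⟩ := hch.dist_eq_of_metricTriangle hconn h
  refine le_antisymm (hch.dist_le_of_mem_interval hconn le_rfl ?_ hx) (not_lt.mp fun hlt => ?_)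
  · rw [dist_comm]; omega
  obtain ⟨z, huz, hzw, hzx⟩ := hch.exists_adj_toward_of_dist_lt hconn hlt
  have hx' : G.dist u x + G.dist x v = G.dist u v := hx
  have := hconn.dist_triangle (u := z) (v := x) (w := v)
  have := hconn.dist_triangle (u := u) (v := z) (w := v)
  have := dist_eq_one_iff_adj.mpr huz
  have : G.dist z u = G.dist u z := dist_comm
  have : G.dist x u = G.dist u x := dist_comm
  have hz : z = u := h.eq_of_mem_interval
    (show G.dist w z + G.dist z u = G.dist w u by omega)
    (show G.dist u z + G.dist z v = G.dist u v by omega)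
  exact huz.ne hz.symm

theorem Chordal.exists_metricTriangle_dist_two (hconn : G.Connected) (hch : Chordal G)
    {u v w : V} (h : MetricTriangle G u v w) (hk : 2 ≤ G.dist u v) :
    ∃ a b c, MetricTriangle G a b c ∧ G.dist a b = 2 := by
  obtain ⟨x, hux, hx⟩ := hconn.exists_dist_eq_of_le hk
  have hwx := hch.dist_eq_of_mem_interval_of_metricTriangle hconn h hx
  -- the metric triangle spanned by `u, x, w` keeps the corner `u` and has size exactly 2
  obtain ⟨a, b, c, habc, h₁, h₂, h₃⟩ := exists_metricTriangle_spanning hconn u x w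
  have hau : a = u := by
    refine h.eq_of_mem_interval ?_ ?_
    · have := hconn.dist_triangle (u := w) (v := c) (w := a)
      have := hconn.dist_triangle (u := w) (v := a) (w := u)
      show G.dist w a + G.dist a u = G.dist w u
      omega
    · have := hconn.dist_triangle (u := a) (v := b) (w := x)
      have := hconn.dist_triangle (u := a) (v := x) (w := v)
      have := hconn.dist_triangle (u := u) (v := a) (w := v)
      show G.dist u a + G.dist a v = G.dist u v
      omega
  rw [hau, dist_self] at h₁ h₃
  rw [hau] at habc
  obtain ⟨e₁, e₂⟩ := hch.dist_eq_of_metricTriangle hconn habc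
  have : G.dist x w = G.dist w x := dist_comm
  have : G.dist c w = G.dist w c := dist_comm
  have : G.dist b x = G.dist x b := dist_comm
  exact ⟨u, b, c, habc, by omega⟩

theorem nonempty_fan3_embedding_of_adj {a b c d m : V} (hab : G.Adj a b) (hbc : G.Adj b c)
    (hcd : G.Adj c d) (hma : G.Adj m a) (hmb : G.Adj m b) (hmc : G.Adj m c) (hmd : G.Adj m d)
    (hac : ¬ G.Adj a c) (had : ¬ G.Adj a d) (hbd : ¬ G.Adj b d) : Nonempty (fan3 ↪g G) := by
  have hac' : a ≠ c := by rintro rfl; exact had hcd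
  have had' : a ≠ d := by rintro rfl; exact hac hcd.symm
  have hbd' : b ≠ d := by rintro rfl; exact had hab
  have hrel : ∀ i j : Fin 5,
      G.Adj (![a, b, c, d, m] i) (![a, b, c, d, m] j) ↔ fan3.Adj i j := by
    intro i j
    fin_cases i <;> fin_cases j <;> simp [fan3, G.adj_comm, hab, hbc, hcd, hma.symm, hmb.symm,
      hmc.symm, hmd.symm, hac, had, hbd]
  refine ⟨⟨⟨![a, b, c, d, m], fun i j hij => ?_⟩, hrel _ _⟩⟩
  fin_cases i <;> fin_cases j <;>
    simp_all [hab.ne, hbc.ne, hcd.ne, hma.ne, hmb.ne, hmc.ne, hmd.ne]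

theorem Chordal.nonempty_fan3_embedding_of_metricTriangle (hconn : G.Connected) (hch : Chordal G)
    {u v w : V} (h : MetricTriangle G u v w) (h₂ : G.dist u v = 2) :
    Nonempty (fan3 ↪g G) := by
  obtain ⟨e₁, e₂⟩ := hch.dist_eq_of_metricTriangle hconn h
  obtain ⟨m, hum, hm⟩ := hconn.exists_dist_eq_of_le (u := u) (v := v) (k := 1) (by omega)
  have hwm := hch.dist_eq_of_mem_interval_of_metricTriangle hconn h hm
  have hmu : G.Adj m u := (dist_eq_one_iff_adj.mp hum).symm
  have hmv : G.Adj m v := dist_eq_one_iff_adj.mp (by omega)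
  have hwv : G.dist w v = 2 := dist_comm.trans (by omega)
  obtain ⟨t, hmt, htv, hwt⟩ :=
    hch.exists_common_neighbor_closer hconn hmv (u := w) (by omega)
  obtain ⟨t', hmt', ht'u, hwt'⟩ :=
    hch.exists_common_neighbor_closer hconn hmu (u := w) (by omega)
  have hno_common_neighbor : ∀ x, G.Adj x u → G.Adj x v → G.Adj x w → False := fun x hxu hxv hxw => by
    have := dist_eq_one_iff_adj.mpr hxu
    have := dist_eq_one_iff_adj.mpr hxv.symm
    have := dist_eq_one_iff_adj.mpr hxw
    have := dist_eq_one_iff_adj.mpr hxw.symm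
    have hx : x = w := h.rotate.rotate.eq_of_mem_interval
      (show G.dist v x + G.dist x w = G.dist v w by omega)
      (show G.dist w x + G.dist x u = G.dist w u by omega)
    exact hxw.ne hx
  have htw : G.Adj t w := dist_eq_one_iff_adj.mp (dist_comm.trans (by omega))
  have ht'w : G.Adj t' w := dist_eq_one_iff_adj.mp (dist_comm.trans (by omega))
  have htu : ¬ G.Adj t u := fun htu => hno_common_neighbor t htu htv htw
  have ht'v : ¬ G.Adj t' v := fun ht'v => hno_common_neighbor t' ht'u ht'v ht'w
  have htt' : G.Adj t t' := by
    refine (hch.eq_or_adj_of_common_neighbor_farther hconn (u := w) (z := m) (by omega)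
      (by omega) hmt hmt').resolve_left ?_
    rintro rfl
    exact ht'v htv
  have hvu : ¬ G.Adj v u := fun hvu => by
    rw [SimpleGraph.dist_comm, dist_eq_one_iff_adj.mpr hvu] at h₂; omega
  exact nonempty_fan3_embedding_of_adj htv.symm htt' ht'u hmv hmt hmt' hmu
    (fun h => ht'v h.symm) hvu htu

end PaperDefs

open PaperDefs

theorem statement5 {V : Type*} (G : SimpleGraph V) (hconn : G.Connected)
    (hch : Chordal G) (hfan : IsEmpty (fan3 ↪g G))
    (u v w : V) (h : MetricTriangle G u v w) :
    G.dist u v = G.dist v w ∧ G.dist v w = G.dist w u ∧ G.dist u v ≤ 1 := by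
  obtain ⟨e₁, e₂⟩ := hch.dist_eq_of_metricTriangle hconn h
  refine ⟨e₁, e₂, not_lt.mp fun hk => ?_⟩
  obtain ⟨a, b, c, habc, hab⟩ := hch.exists_metricTriangle_dist_two hconn h hk
  exact hfan.false (hch.nonempty_fan3_embedding_of_metricTriangle hconn habc hab).some
end
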